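/- arXiv:1005.4715 — 2 statements merged into one kernel-verified Lean document; each statement's English description precedes it below -/
import Mathlib

section
/- Let a > 0, b > 0, and Γ > 0, and for h > 0 let U(h) := (Γ/2a)[ tanh(πb/a) + Σ_{n=1}^{∞} ( tanh(π(b+nh)/a) + tanh(π(b−nh)/a) ) ]. Then U is strictly decreasing on (0, ∞): if 0 < h₁ < h₂ then U(h₁) > U(h₂). -/
/-!
Pairing the terms `n` and `-n`, each summand is
`tanh (c + x) + tanh (c - x) = 2 sinh (2c) / (cosh (2c) + cosh (2x))` with `c = πb/a`,
`x = nπh/a`: positive, strictly decreasing in `x ≥ 0`, and `O(exp (-2x))`. Hence the series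
converges and increasing `h` strictly decreases every summand, so it strictly decreases the sum.
-/

open Set

namespace Real

lemma tanh_add_tanh (u v : ℝ) : tanh u + tanh v = sinh (u + v) / (cosh u * cosh v) := by
  rw [tanh_eq_sinh_div_cosh, tanh_eq_sinh_div_cosh, sinh_add]
  field_simp [(cosh_pos u).ne', (cosh_pos v).ne']

lemma cosh_add_mul_cosh_sub (c x : ℝ) :
    cosh (c + x) * cosh (c - x) = (cosh (2 * c) + cosh (2 * x)) / 2 := by
  rw [cosh_add, cosh_sub, cosh_two_mul, cosh_two_mul]
  nlinarith [sinh_sq c, sinh_sq x]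

lemma tanh_add_add_tanh_sub (c x : ℝ) :
    tanh (c + x) + tanh (c - x) = 2 * sinh (2 * c) / (cosh (2 * c) + cosh (2 * x)) := by
  rw [tanh_add_tanh, cosh_add_mul_cosh_sub, show c + x + (c - x) = 2 * c by ring]
  field_simp

lemma tanh_add_add_tanh_sub_pos {c : ℝ} (hc : 0 < c) (x : ℝ) :
    0 < tanh (c + x) + tanh (c - x) := by
  rw [tanh_add_add_tanh_sub]
  have : 0 < sinh (2 * c) := sinh_pos_iff.2 (by linarith)
  positivity

lemma strictAntiOn_tanh_add_add_tanh_sub {c : ℝ} (hc : 0 < c) :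
    StrictAntiOn (fun x => tanh (c + x) + tanh (c - x)) (Ici 0) := by
  intro x hx y hy hxy
  simp only [tanh_add_add_tanh_sub]
  have hcosh : cosh (2 * x) < cosh (2 * y) :=
    cosh_strictMonoOn (by simpa using hx) (by simpa using hy) (by linarith)
  gcongr

lemma abs_tanh_add_add_tanh_sub_le (c x : ℝ) :
    |tanh (c + x) + tanh (c - x)| ≤ 4 * |sinh (2 * c)| * exp (-(2 * x)) := by
  have hexp : exp (2 * x) ≤ 2 * (cosh (2 * c) + cosh (2 * x)) := by
    have := one_le_cosh (2 * c)
    have := exp_pos (-(2 * x))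
    rw [cosh_eq (2 * x)]
    linarith
  have hden : 0 < cosh (2 * c) + cosh (2 * x) := by positivity
  rw [tanh_add_add_tanh_sub, abs_div, abs_mul, abs_two, abs_of_pos hden, exp_neg,
    div_le_iff₀ hden]
  calc 2 * |sinh (2 * c)|
      = 2 * |sinh (2 * c)| * (exp (2 * x) * (exp (2 * x))⁻¹) := by
        rw [mul_inv_cancel₀ (exp_pos _).ne', mul_one]
    _ ≤ 2 * |sinh (2 * c)| * (2 * (cosh (2 * c) + cosh (2 * x)) * (exp (2 * x))⁻¹) := by
        gcongr
    _ = 4 * |sinh (2 * c)| * (exp (2 * x))⁻¹ * (cosh (2 * c) + cosh (2 * x)) := by ring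

lemma summable_tanh_add_add_tanh_sub (c : ℝ) {t : ℝ} (ht : 0 < t) :
    Summable fun n : ℕ => tanh (c + (n + 1) * t) + tanh (c - (n + 1) * t) := by
  have hgeom : Summable fun n : ℕ => exp (n * -(2 * t)) :=
    summable_exp_nat_mul_iff.2 (by linarith)
  refine Summable.of_norm_bounded
    ((hgeom.mul_left (4 * |sinh (2 * c)| * exp (-(2 * t))))) fun n => ?_
  calc ‖tanh (c + (n + 1) * t) + tanh (c - (n + 1) * t)‖
      ≤ 4 * |sinh (2 * c)| * exp (-(2 * ((n + 1) * t))) := abs_tanh_add_add_tanh_sub_le _ _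
    _ = 4 * |sinh (2 * c)| * exp (-(2 * t)) * exp (n * -(2 * t)) := by
        rw [mul_assoc (4 * |sinh (2 * c)|), ← exp_add]
        ring_nf

lemma strictAntiOn_tsum_tanh_add_add_tanh_sub {c : ℝ} (hc : 0 < c) :
    StrictAntiOn (fun t => ∑' n : ℕ, (tanh (c + (n + 1) * t) + tanh (c - (n + 1) * t)))
      (Ioi 0) := by
  intro s hs t ht hst
  have hs : (0 : ℝ) < s := hs
  have ht : (0 : ℝ) < t := hs.trans hst
  have hsummand : ∀ n : ℕ, tanh (c + (n + 1) * t) + tanh (c - (n + 1) * t)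
      < tanh (c + (n + 1) * s) + tanh (c - (n + 1) * s) := fun n =>
    strictAntiOn_tanh_add_add_tanh_sub hc (by simp only [mem_Ici]; positivity)
      (by simp only [mem_Ici]; positivity) (by gcongr)
  exact Summable.tsum_lt_tsum_of_nonneg (i := 0)
    (fun n => (tanh_add_add_tanh_sub_pos hc _).le) (fun n => (hsummand n).le) (hsummand 0)
    (summable_tanh_add_add_tanh_sub c hs)

end Real

/-- For positive parameters, the translational velocity of the infinite array is a
strictly decreasing function of the separation `h` between adjacent streets. -/
theorem array_velocity_strictAnti (a b Γ : ℝ) (ha : 0 < a) (hb : 0 < b) (hΓ : 0 < Γ) :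
    ∀ h₁ h₂ : ℝ, 0 < h₁ → h₁ < h₂ →
      (Γ / (2 * a)) * (Real.tanh (Real.pi * b / a) +
        ∑' n : ℕ, (Real.tanh (Real.pi * (b + (n + 1) * h₂) / a) +
          Real.tanh (Real.pi * (b - (n + 1) * h₂) / a))) <
      (Γ / (2 * a)) * (Real.tanh (Real.pi * b / a) +
        ∑' n : ℕ, (Real.tanh (Real.pi * (b + (n + 1) * h₁) / a) +
          Real.tanh (Real.pi * (b - (n + 1) * h₁) / a))) := by
  intro h₁ h₂ hh₁ hlt
  have hrescale : ∀ h : ℝ, ∑' n : ℕ, (Real.tanh (Real.pi * (b + (n + 1) * h) / a) +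
      Real.tanh (Real.pi * (b - (n + 1) * h) / a)) =
      ∑' n : ℕ, (Real.tanh (Real.pi * b / a + (n + 1) * (Real.pi * h / a)) +
        Real.tanh (Real.pi * b / a - (n + 1) * (Real.pi * h / a))) := fun h =>
    tsum_congr fun n => by ring_nf
  rw [hrescale, hrescale]
  gcongr ?_ * (_ + ?_)
  exact Real.strictAntiOn_tsum_tanh_add_add_tanh_sub (by positivity)
    (show 0 < Real.pi * h₁ / a by positivity) (show 0 < Real.pi * h₂ / a by have := hh₁.trans hlt; positivity)
    (by gcongr)
end

section
/- Let a > 0, h > 0, b ∈ ℝ, and let z ∈ ℂ be such that z ≠ ma + nhi and z ≠ (m+1/2)a + (b+nh)i for all m, n ∈ ℤ. Then the family indexed by n ∈ ℤ given by n ↦ cot( π(z − a/2 − (b+nh)i)/a ) − cot( π(z − nhi)/a ) is summable (absolutely convergent over ℤ). -/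
/-!
Since `cot w - i = 2i / (exp (2iw) - 1)`, the cotangent tends to `i` geometrically fast as
`Im w → -∞`, and (being odd) to `-i` as `Im w → +∞`. Both arguments of the `n`-th term are
`c - n t i` and `d - n t i` with `t = π h / a ≠ 0`, so the two limits cancel and the terms decay
geometrically in `|n|`.
-/

open Complex

namespace Complex

lemma cot_neg (w : ℂ) : cot (-w) = -cot w := by
  simp [cot, div_neg]

lemma cot_sub_I_eq (w : ℂ) (hw : exp (2 * I * w) ≠ 1) :
    cot w - I = 2 * I / (exp (2 * I * w) - 1) := by
  have hsub : 1 - exp (2 * I * w) ≠ 0 := sub_ne_zero.mpr hw.symm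
  rw [cot_eq_exp_ratio]
  field_simp
  ring_nf
  simp only [I_sq]
  ring

lemma norm_cot_sub_I_le (w : ℂ) (hw : 2 ≤ ‖exp (2 * I * w)‖) :
    ‖cot w - I‖ ≤ 4 / ‖exp (2 * I * w)‖ := by
  set q := exp (2 * I * w)
  have hq1 : q ≠ 1 := fun h => by norm_num [h] at hw
  have hq_sub : ‖q‖ / 2 ≤ ‖q - 1‖ := by
    have := norm_sub_norm_le q 1
    rw [norm_one] at this
    linarith
  rw [cot_sub_I_eq w hq1, norm_div, norm_mul, norm_I, RCLike.norm_ofNat, mul_one,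
    div_le_div_iff₀ (by linarith) (by linarith)]
  linarith

lemma summable_cot_sub_I (c : ℂ) {t : ℝ} (ht : 0 < t) :
    Summable fun n : ℕ => cot (c - n * t * I) - I := by
  set K := ‖exp (2 * I * c)‖
  set R := Real.exp (2 * t)
  have hK : 0 < K := norm_pos_iff.mpr (exp_ne_zero _)
  have hR : 1 < R := Real.one_lt_exp_iff.mpr (by linarith)
  have hnorm (n : ℕ) : ‖exp (2 * I * (c - n * t * I))‖ = K * R ^ n := by
    have : 2 * I * (c - n * t * I) = 2 * I * c + n * (2 * t : ℝ) := by
      push_cast; ring_nf; rw [I_sq]; ring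
    rw [this, exp_add, exp_nat_mul, ← ofReal_exp, norm_mul, norm_pow, norm_real,
      Real.norm_of_nonneg (Real.exp_nonneg _)]
  have hgrow : Filter.Tendsto (fun n : ℕ => K * R ^ n) Filter.atTop Filter.atTop :=
    (tendsto_pow_atTop_atTop_of_one_lt hR).const_mul_atTop hK
  refine Summable.of_norm_bounded_eventually_nat (g := fun n => 4 / K * R⁻¹ ^ n)
    ((summable_geometric_of_lt_one (by positivity) (inv_lt_one_of_one_lt₀ hR)).mul_left _) ?_
  filter_upwards [hgrow.eventually_ge_atTop 2] with n hn
  calc ‖cot (c - n * t * I) - I‖ ≤ 4 / (K * R ^ n) :=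
        hnorm n ▸ norm_cot_sub_I_le _ (hnorm n ▸ hn)
    _ = 4 / K * R⁻¹ ^ n := by rw [inv_pow, div_mul_eq_div_div, div_eq_mul_inv (4 / K)]

lemma summable_cot_sub_cot_of_pos (c d : ℂ) {t : ℝ} (ht : 0 < t) :
    Summable fun n : ℤ => cot (c - n * t * I) - cot (d - n * t * I) := by
  refine .of_nat_of_neg ?_ ?_
  · simpa using (summable_cot_sub_I c ht).sub (summable_cot_sub_I d ht)
  · refine ((summable_cot_sub_I (-d) ht).sub (summable_cot_sub_I (-c) ht)).congr fun n => ?_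
    have hc : c - ((-n : ℤ) : ℂ) * t * I = -(-c - n * t * I) := by push_cast; ring
    have hd : d - ((-n : ℤ) : ℂ) * t * I = -(-d - n * t * I) := by push_cast; ring
    rw [hc, hd, cot_neg, cot_neg]
    ring

lemma summable_cot_sub_cot (c d : ℂ) {t : ℝ} (ht : t ≠ 0) :
    Summable fun n : ℤ => cot (c - n * t * I) - cot (d - n * t * I) := by
  rcases ht.lt_or_gt with ht | ht
  · refine ((Equiv.neg ℤ).summable_iff.mpr (summable_cot_sub_cot_of_pos c d (neg_pos.mpr ht))).congr
      fun n => ?_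
    simp only [Function.comp_apply, Equiv.neg_apply, Int.cast_neg, ofReal_neg]
    ring_nf
  · exact summable_cot_sub_cot_of_pos c d ht

end Complex

theorem array_velocity_field_summable_general (a h b : ℝ) (ha : 0 < a) (hh : 0 < h) (z : ℂ) :
    Summable (fun n : ℤ =>
      Complex.cot ((Real.pi : ℂ) * (z - (a : ℂ) / 2 - ((b : ℂ) + (n : ℂ) * (h : ℂ)) * Complex.I) / (a : ℂ)) -
        Complex.cot ((Real.pi : ℂ) * (z - (n : ℂ) * (h : ℂ) * Complex.I) / (a : ℂ))) := by
  have ha' : (a : ℂ) ≠ 0 := ofReal_ne_zero.mpr ha.ne'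
  refine (summable_cot_sub_cot (Real.pi * (z - a / 2 - b * I) / a) (Real.pi * z / a)
    (t := Real.pi * h / a) (by positivity)).congr fun n => ?_
  push_cast
  congr 2
  · field_simp
    ring
  · field_simp

/-- Off the vortex lattice, the cotangent-difference terms of the conjugate velocity
field of the infinite array of streets are absolutely summable over the street
index `n ∈ ℤ`. -/
theorem array_velocity_field_summable (a h b : ℝ) (ha : 0 < a) (hh : 0 < h) (z : ℂ)
    (hz1 : ∀ m n : ℤ, z ≠ (m : ℂ) * (a : ℂ) + (n : ℂ) * (h : ℂ) * Complex.I)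
    (hz2 : ∀ m n : ℤ, z ≠ ((m : ℂ) + 1 / 2) * (a : ℂ) + ((b : ℂ) + (n : ℂ) * (h : ℂ)) * Complex.I) :
    Summable (fun n : ℤ =>
      Complex.cot ((Real.pi : ℂ) * (z - (a : ℂ) / 2 - ((b : ℂ) + (n : ℂ) * (h : ℂ)) * Complex.I) / (a : ℂ)) -
        Complex.cot ((Real.pi : ℂ) * (z - (n : ℂ) * (h : ℂ) * Complex.I) / (a : ℂ))) :=
  array_velocity_field_summable_general a h b ha hh z
end
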